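/- A horizontal composition of 2-paths is rank-2 homotopic to its two whiskered vertical decompositions: let h₁, h₂ be 2-paths in M such that the single point h₁(ℝ×{1}) equals the single point h₂(ℝ×{0}); then h₁∘h₂ is rank-2 homotopic to the vertical composite (h₁∘h₂(0,·))·(h₁(1,·)∘h₂) (right whiskering of h₁ with the 1-path h₂(0,·), followed vertically by left whiskering of h₂ with the 1-path h₁(1,·)), and h₁∘h₂ is also rank-2 homotopic to (h₁(0,·)∘h₂)·(h₁∘h₂(1,·)). -/

import Mathlib

/-!
The homotopy is a family, indexed by `r`, of horizontal composites of `h₁ (u r s, 2 t)` and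
`h₂ (v r s, 2 t - 1)`, in which the two halves are reparametrized in `s` independently: `u` and `v`
move from the identity to smoothed versions of `s ↦ min (2 s) 1` and `s ↦ max (2 s - 1) 0`
(or the other way round). Since `h₁` and `h₂` are constant near their boundary lines, the
smoothing is invisible and at `r = 1` the family is the whiskered vertical composite. Near every
point the family factors through a smooth map into `ℝ²`, which bounds the rank of its
differential by `2`; at `s = 0` and `s = 1` it does not depend on `r`, so its restrictions there
are rank-1 homotopies.
-/

open scoped Manifold

variable (E : Type*) [NormedAddCommGroup E] [NormedSpace ℝ E] [FiniteDimensional ℝ E]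
variable {M : Type*} [TopologicalSpace M] [ChartedSpace E M]
  [IsManifold 𝓘(ℝ, E) (⊤ : ℕ∞) M]

/-- A 1-path in `M`: a smooth map `ℝ → M` that is constant near `(-∞, 0]` and near
`[1, ∞)` (in the sense of the `ε`-conditions). -/
def IsOnePath (γ : ℝ → M) : Prop :=
  ContMDiff 𝓘(ℝ, ℝ) 𝓘(ℝ, E) (⊤ : ℕ∞) γ ∧
    ∃ ε > (0 : ℝ), (∀ t ≤ ε, γ t = γ 0) ∧ (∀ t, 1 - ε ≤ t → γ t = γ 1)

/-- A 2-path in `M`, as a smooth map `ℝ × ℝ → M` with coordinates `(s, t)`,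
constant near the boundary in each variable, whose images at `t = 0` and `t = 1`
are single points. -/
def IsTwoPath (g : ℝ × ℝ → M) : Prop :=
  ContMDiff 𝓘(ℝ, ℝ × ℝ) 𝓘(ℝ, E) (⊤ : ℕ∞) g ∧
    (∃ ε > (0 : ℝ),
      (∀ s t, s ≤ ε → g (s, t) = g (0, t)) ∧
      (∀ s t, 1 - ε ≤ s → g (s, t) = g (1, t)) ∧
      (∀ s t, t ≤ ε → g (s, t) = g (s, 0)) ∧
      (∀ s t, 1 - ε ≤ t → g (s, t) = g (s, 1))) ∧
    (∀ s s', g (s, 0) = g (s', 0)) ∧ (∀ s s', g (s, 1) = g (s', 1))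

/-- A rank-1 homotopy: a 2-path whose differential has rank at most 1 at every point. -/
def IsRank1Homotopy (h : ℝ × ℝ → M) : Prop :=
  IsTwoPath E h ∧
    ∀ p : ℝ × ℝ,
      Module.finrank ℝ
        (LinearMap.range (mfderiv 𝓘(ℝ, ℝ × ℝ) 𝓘(ℝ, E) h p).toLinearMap) ≤ 1

/-- Two 1-paths are rank-1 homotopic if they are joined by a rank-1 homotopy. -/
def Rank1Homotopic (γ γ' : ℝ → M) : Prop :=
  ∃ h : ℝ × ℝ → M, IsRank1Homotopy E h ∧ (∀ t, h (0, t) = γ t) ∧ (∀ t, h (1, t) = γ' t)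

/-- A 3-path in `M`, as a smooth map `ℝ × ℝ × ℝ → M` with coordinates `(r, s, t)`. -/
def IsThreePath (α : ℝ × ℝ × ℝ → M) : Prop :=
  ContMDiff 𝓘(ℝ, ℝ × ℝ × ℝ) 𝓘(ℝ, E) (⊤ : ℕ∞) α ∧
    (∃ ε > (0 : ℝ),
      (∀ r s t, r ≤ ε → α (r, s, t) = α (0, s, t)) ∧
      (∀ r s t, 1 - ε ≤ r → α (r, s, t) = α (1, s, t)) ∧
      (∀ r s t, s ≤ ε → α (r, s, t) = α (r, 0, t)) ∧
      (∀ r s t, 1 - ε ≤ s → α (r, s, t) = α (r, 1, t)) ∧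
      (∀ r s t, t ≤ ε → α (r, s, t) = α (r, s, 0)) ∧
      (∀ r s t, 1 - ε ≤ t → α (r, s, t) = α (r, s, 1))) ∧
    (∀ r s r' s', α (r, s, 0) = α (r', s', 0)) ∧
    (∀ r s r' s', α (r, s, 1) = α (r', s', 1))

/-- A rank-2 homotopy: a 3-path whose differential has rank at most 2 at every point and
whose restrictions to `s = 0` and `s = 1` are rank-1 homotopies. -/
def IsRank2Homotopy (α : ℝ × ℝ × ℝ → M) : Prop :=
  IsThreePath E α ∧
    (∀ p : ℝ × ℝ × ℝ,
      Module.finrank ℝ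
        (LinearMap.range (mfderiv 𝓘(ℝ, ℝ × ℝ × ℝ) 𝓘(ℝ, E) α p).toLinearMap) ≤ 2) ∧
    IsRank1Homotopy E (fun p : ℝ × ℝ => α (p.1, 0, p.2)) ∧
    IsRank1Homotopy E (fun p : ℝ × ℝ => α (p.1, 1, p.2))

/-- `α` is a rank-2 homotopy from the 2-path `g` to the 2-path `g'`. -/
def Rank2HomotopyFrom (α : ℝ × ℝ × ℝ → M) (g g' : ℝ × ℝ → M) : Prop :=
  IsRank2Homotopy E α ∧ (∀ s t, α (0, s, t) = g (s, t)) ∧ (∀ s t, α (1, s, t) = g' (s, t))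

/-- Two 2-paths are rank-2 homotopic if they are joined by a rank-2 homotopy. -/
def Rank2Homotopic (g g' : ℝ × ℝ → M) : Prop :=
  ∃ α : ℝ × ℝ × ℝ → M, Rank2HomotopyFrom E α g g'

/-- Vertical composition of 2-paths. -/
noncomputable def vertComp (g h : ℝ × ℝ → M) : ℝ × ℝ → M := fun p =>
  if p.1 ≤ 1 / 2 then g (2 * p.1, p.2) else h (2 * p.1 - 1, p.2)

/-- Horizontal composition of 2-paths. -/
noncomputable def horizComp (g h : ℝ × ℝ → M) : ℝ × ℝ → M := fun p =>
  if p.2 ≤ 1 / 2 then g (p.1, 2 * p.2) else h (p.1, 2 * p.2 - 1)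

/-- Left whiskering of a 2-path `g` with a 1-path `γ`. -/
noncomputable def leftWhisker (γ : ℝ → M) (g : ℝ × ℝ → M) : ℝ × ℝ → M := fun p =>
  if p.2 ≤ 1 / 2 then γ (2 * p.2) else g (p.1, 2 * p.2 - 1)

/-- Right whiskering of a 2-path `g` with a 1-path `γ`. -/
noncomputable def rightWhisker (g : ℝ × ℝ → M) (γ : ℝ → M) : ℝ × ℝ → M := fun p =>
  if p.2 ≤ 1 / 2 then g (p.1, 2 * p.2) else γ (2 * p.2 - 1)

variable {E}

attribute [fun_prop] Real.smoothTransition.contDiff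

noncomputable def smoothClamp (ε x : ℝ) : ℝ := x * Real.smoothTransition (x / ε)

@[fun_prop]
theorem contDiff_smoothClamp (ε : ℝ) : ContDiff ℝ (⊤ : ℕ∞) (smoothClamp ε) := by
  unfold smoothClamp
  fun_prop

theorem smoothClamp_of_nonpos {ε x : ℝ} (hε : 0 < ε) (hx : x ≤ 0) : smoothClamp ε x = 0 := by
  rw [smoothClamp, Real.smoothTransition.zero_of_nonpos (div_nonpos_of_nonpos_of_nonneg hx hε.le),
    mul_zero]

theorem smoothClamp_of_le {ε x : ℝ} (hε : 0 < ε) (hx : ε ≤ x) : smoothClamp ε x = x := by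
  rw [smoothClamp, Real.smoothTransition.one_of_one_le ((one_le_div hε).mpr hx), mul_one]

theorem smoothClamp_le {ε x : ℝ} (hε : 0 < ε) (hx : x ≤ ε) : smoothClamp ε x ≤ ε := by
  rcases le_or_gt x 0 with h | h
  · rw [smoothClamp_of_nonpos hε h]
    exact hε.le
  · exact (mul_le_of_le_one_right h.le (Real.smoothTransition.le_one _)).trans hx

/- Smooth versions of `s ↦ min (2 * s) 1` and `s ↦ max (2 * s - 1) 0`; they differ from these
only inside `ε`-collars, where a collared path does not see the difference. -/
noncomputable def firstHalfReparam (ε s : ℝ) : ℝ := 1 - smoothClamp ε (1 - 2 * s)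

noncomputable def secondHalfReparam (ε s : ℝ) : ℝ := smoothClamp ε (2 * s - 1)

@[fun_prop]
theorem contDiff_firstHalfReparam (ε : ℝ) : ContDiff ℝ (⊤ : ℕ∞) (firstHalfReparam ε) := by
  unfold firstHalfReparam
  fun_prop

@[fun_prop]
theorem contDiff_secondHalfReparam (ε : ℝ) : ContDiff ℝ (⊤ : ℕ∞) (secondHalfReparam ε) := by
  unfold secondHalfReparam
  fun_prop

def MapsCollar (δ ε : ℝ) (f : ℝ → ℝ) : Prop :=
  (∀ s ≤ δ, f s ≤ ε) ∧ ∀ s, 1 - δ ≤ s → 1 - ε ≤ f s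

theorem mapsCollar_firstHalfReparam {δ ε : ℝ} (hε : 0 < ε) (hε2 : ε ≤ 1 / 2) (hδε : 2 * δ ≤ ε) :
    MapsCollar δ ε (firstHalfReparam ε) := by
  refine ⟨fun s hs => ?_, fun s hs => ?_⟩
  · rw [firstHalfReparam, smoothClamp_of_le hε (by linarith)]
    linarith
  · rw [firstHalfReparam, smoothClamp_of_nonpos hε (by linarith)]
    linarith

theorem mapsCollar_secondHalfReparam {δ ε : ℝ} (hε : 0 < ε) (hε2 : ε ≤ 1 / 2) (hδε : 2 * δ ≤ ε) :
    MapsCollar δ ε (secondHalfReparam ε) := by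
  refine ⟨fun s hs => ?_, fun s hs => ?_⟩
  · rw [secondHalfReparam, smoothClamp_of_nonpos hε (by linarith)]
    exact hε.le
  · rw [secondHalfReparam, smoothClamp_of_le hε (by linarith)]
    linarith

noncomputable def smoothStep (r : ℝ) : ℝ := Real.smoothTransition (3 * r - 1)

theorem smoothStep_of_le {r : ℝ} (hr : r ≤ 1 / 3) : smoothStep r = 0 :=
  Real.smoothTransition.zero_of_nonpos (by linarith)

theorem smoothStep_of_ge {r : ℝ} (hr : 2 / 3 ≤ r) : smoothStep r = 1 :=
  Real.smoothTransition.one_of_one_le (by linarith)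

noncomputable def homotopyReparam (f : ℝ → ℝ) (p : ℝ × ℝ) : ℝ :=
  (1 - smoothStep p.1) * p.2 + smoothStep p.1 * f p.2

theorem homotopyReparam_of_le (f : ℝ → ℝ) {r : ℝ} (hr : r ≤ 1 / 3) (s : ℝ) :
    homotopyReparam f (r, s) = s := by
  simp [homotopyReparam, smoothStep_of_le hr]

theorem homotopyReparam_of_ge (f : ℝ → ℝ) {r : ℝ} (hr : 2 / 3 ≤ r) (s : ℝ) :
    homotopyReparam f (r, s) = f s := by
  simp [homotopyReparam, smoothStep_of_ge hr]

theorem MapsCollar.homotopyReparam {δ ε : ℝ} {f : ℝ → ℝ} (hf : MapsCollar δ ε f) (hδε : δ ≤ ε)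
    (r : ℝ) : MapsCollar δ ε (fun s => homotopyReparam f (r, s)) := by
  have h0 : 0 ≤ smoothStep r := Real.smoothTransition.nonneg _
  have h1 : 0 ≤ 1 - smoothStep r := sub_nonneg.mpr (Real.smoothTransition.le_one _)
  refine ⟨fun s hs => ?_, fun s hs => ?_⟩
  · exact convex_Iic ε (hs.trans hδε : s ≤ ε) (hf.1 s hs) h1 h0 (sub_add_cancel _ _)
  · exact convex_Ici (1 - ε) (by linarith : 1 - ε ≤ s) (hf.2 s hs) h1 h0 (sub_add_cancel _ _)

@[fun_prop]
theorem contDiff_homotopyReparam {f : ℝ → ℝ} (hf : ContDiff ℝ (⊤ : ℕ∞) f) :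
    ContDiff ℝ (⊤ : ℕ∞) (homotopyReparam f) := by
  unfold homotopyReparam smoothStep
  fun_prop

structure IsCollarReparam (δ ε : ℝ) (u : ℝ × ℝ → ℝ) : Prop where
  contDiff : ContDiff ℝ (⊤ : ℕ∞) u
  eq_zero : ∀ r ≤ δ, ∀ s, u (r, s) = u (0, s)
  eq_one : ∀ r, 1 - δ ≤ r → ∀ s, u (r, s) = u (1, s)
  mapsCollar : ∀ r, MapsCollar δ ε (fun s => u (r, s))

theorem isCollarReparam_homotopyReparam {δ ε : ℝ} {f : ℝ → ℝ} (hf : ContDiff ℝ (⊤ : ℕ∞) f)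
    (hfc : MapsCollar δ ε f) (hδ : δ ≤ 1 / 3) (hδε : δ ≤ ε) :
    IsCollarReparam δ ε (homotopyReparam f) where
  contDiff := contDiff_homotopyReparam hf
  eq_zero r hr s := by
    rw [homotopyReparam_of_le f (hr.trans hδ), homotopyReparam_of_le f (by norm_num)]
  eq_one r hr s := by
    rw [homotopyReparam_of_ge f (by linarith), homotopyReparam_of_ge f (by norm_num)]
  mapsCollar := hfc.homotopyReparam hδε

section Collar

variable {X : Type*} {ε : ℝ} {g h₁ h₂ : ℝ × ℝ → X}

structure IsCollared (ε : ℝ) (g : ℝ × ℝ → X) : Prop where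
  left : ∀ s ≤ ε, ∀ t, g (s, t) = g (0, t)
  right : ∀ s, 1 - ε ≤ s → ∀ t, g (s, t) = g (1, t)
  bottom : ∀ t ≤ ε, ∀ s, g (s, t) = g (0, 0)
  top : ∀ t, 1 - ε ≤ t → ∀ s, g (s, t) = g (0, 1)

theorem IsCollared.mono {ε' : ℝ} (hg : IsCollared ε g) (h : ε' ≤ ε) : IsCollared ε' g where
  left s hs := hg.left s (hs.trans h)
  right s hs := hg.right s (by linarith)
  bottom t ht := hg.bottom t (ht.trans h)
  top t ht := hg.top t (by linarith)

theorem IsCollared.apply_firstHalfReparam (hg : IsCollared ε g) (hε : 0 < ε) (s t : ℝ) :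
    g (firstHalfReparam ε s, t) = if s ≤ 1 / 2 then g (2 * s, t) else g (1, t) := by
  split_ifs with hs
  · rcases le_or_gt ε (1 - 2 * s) with h | h
    · rw [firstHalfReparam, smoothClamp_of_le hε h, sub_sub_cancel]
    · have hclamp := smoothClamp_le hε h.le
      rw [hg.right _ (by rw [firstHalfReparam]; linarith), hg.right (2 * s) (by linarith)]
  · rw [firstHalfReparam, smoothClamp_of_nonpos hε (by linarith), sub_zero]

theorem IsCollared.apply_secondHalfReparam (hg : IsCollared ε g) (hε : 0 < ε) (s t : ℝ) :
    g (secondHalfReparam ε s, t) = if s ≤ 1 / 2 then g (0, t) else g (2 * s - 1, t) := by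
  split_ifs with hs
  · rw [secondHalfReparam, smoothClamp_of_nonpos hε (by linarith)]
  · rcases le_or_gt ε (2 * s - 1) with h | h
    · rw [secondHalfReparam, smoothClamp_of_le hε h]
    · rw [secondHalfReparam, hg.left _ (smoothClamp_le hε h.le), hg.left (2 * s - 1) h.le]

theorem vertComp_rightWhisker_leftWhisker_eq (hc₁ : IsCollared ε h₁) (hc₂ : IsCollared ε h₂)
    (hε : 0 < ε) :
    vertComp (rightWhisker h₁ (fun t => h₂ (0, t))) (leftWhisker (fun t => h₁ (1, t)) h₂) =
      horizComp (fun q => h₁ (firstHalfReparam ε q.1, q.2))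
        (fun q => h₂ (secondHalfReparam ε q.1, q.2)) := by
  funext p
  simp only [vertComp, rightWhisker, leftWhisker, horizComp, hc₁.apply_firstHalfReparam hε,
    hc₂.apply_secondHalfReparam hε]
  split_ifs <;> rfl

theorem vertComp_leftWhisker_rightWhisker_eq (hc₁ : IsCollared ε h₁) (hc₂ : IsCollared ε h₂)
    (hε : 0 < ε) :
    vertComp (leftWhisker (fun t => h₁ (0, t)) h₂) (rightWhisker h₁ (fun t => h₂ (1, t))) =
      horizComp (fun q => h₁ (secondHalfReparam ε q.1, q.2))
        (fun q => h₂ (firstHalfReparam ε q.1, q.2)) := by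
  funext p
  simp only [vertComp, rightWhisker, leftWhisker, horizComp, hc₁.apply_secondHalfReparam hε,
    hc₂.apply_firstHalfReparam hε]
  split_ifs <;> rfl

end Collar

theorem IsTwoPath.exists_isCollared {g : ℝ × ℝ → M} (hg : IsTwoPath E g) :
    ∃ ε > 0, IsCollared ε g := by
  obtain ⟨-, ⟨ε, hε, hl, hr, hb, ht⟩, h0, h1⟩ := hg
  exact ⟨ε, hε, fun s hs t => hl s t hs, fun s hs t => hr s t hs,
    fun t ht' s => (hb s t ht').trans (h0 s 0), fun t ht' s => (ht s t ht').trans (h1 s 0)⟩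

theorem finrank_range_mfderiv_le_of_eventuallyEq_comp
    {X Y : Type*} [NormedAddCommGroup X] [NormedSpace ℝ X]
    [NormedAddCommGroup Y] [NormedSpace ℝ Y] [FiniteDimensional ℝ Y]
    {g : Y → M} {f : X → Y} {φ : X → M} {p : X}
    (hg : MDifferentiableAt 𝓘(ℝ, Y) 𝓘(ℝ, E) g (f p)) (hf : DifferentiableAt ℝ f p)
    (hφ : φ =ᶠ[nhds p] g ∘ f) :
    Module.finrank ℝ (LinearMap.range (mfderiv 𝓘(ℝ, X) 𝓘(ℝ, E) φ p).toLinearMap)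
      ≤ Module.finrank ℝ Y := by
  rw [hφ.mfderiv_eq, mfderiv_comp p hg hf.mdifferentiableAt]
  set A : Y →L[ℝ] E := mfderiv 𝓘(ℝ, Y) 𝓘(ℝ, E) g (f p)
  set B : X →L[ℝ] Y := mfderiv 𝓘(ℝ, X) 𝓘(ℝ, Y) f p
  calc Module.finrank ℝ (LinearMap.range (A.comp B).toLinearMap)
      = Module.finrank ℝ ((LinearMap.range B.toLinearMap).map A.toLinearMap) := by
        rw [ContinuousLinearMap.toLinearMap_comp, LinearMap.range_comp]
    _ ≤ Module.finrank ℝ Y := (Submodule.finrank_map_le _ _).trans (Submodule.finrank_le _)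

theorem IsOnePath.isRank1Homotopy_snd {β : ℝ → M} (hβ : IsOnePath E β) :
    IsRank1Homotopy E (fun p : ℝ × ℝ => β p.2) := by
  obtain ⟨hsmooth, ε, hε, h0, h1⟩ := hβ
  refine ⟨⟨hsmooth.comp (contMDiff_iff_contDiff.mpr contDiff_snd),
    ⟨ε, hε, fun _ _ _ => rfl, fun _ _ _ => rfl, fun _ t ht => h0 t ht, fun _ t ht => h1 t ht⟩,
    fun _ _ => rfl, fun _ _ => rfl⟩, fun p => ?_⟩
  exact (finrank_range_mfderiv_le_of_eventuallyEq_comp (φ := fun q : ℝ × ℝ => β q.2)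
    (hsmooth.mdifferentiableAt (by simp)) differentiableAt_snd .rfl).trans
    (Module.finrank_self ℝ).le

theorem IsThreePath.isOnePath_slice {α : ℝ × ℝ × ℝ → M} (hα : IsThreePath E α) (r s : ℝ) :
    IsOnePath E (fun t => α (r, s, t)) := by
  obtain ⟨hsmooth, ⟨ε, hε, -, -, -, -, h0, h1⟩, -⟩ := hα
  exact ⟨hsmooth.comp (contMDiff_iff_contDiff.mpr (by fun_prop)), ε, hε,
    fun t ht => h0 r s t ht, fun t ht => h1 r s t ht⟩

theorem eventuallyEq_ite_of_eqOn_window {Y Z : Type*} [TopologicalSpace Y] {τ : Y → ℝ}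
    (hτ : Continuous τ) {c δ : ℝ} (hδ : 0 < δ) {A B : Y → Z}
    (hAB : ∀ y, c - δ < τ y → τ y < c + δ → A y = B y) (y₀ : Y) :
    (fun y => if τ y ≤ c then A y else B y) =ᶠ[nhds y₀] A ∨
      (fun y => if τ y ≤ c then A y else B y) =ᶠ[nhds y₀] B := by
  rcases lt_or_ge (τ y₀) (c + δ) with h | h
  · refine .inl ?_
    filter_upwards [hτ.continuousAt.eventually_lt continuousAt_const h] with y hy
    split_ifs with hc
    · rfl
    · exact (hAB y (by linarith) hy).symm
  · refine .inr ?_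
    filter_upwards [continuousAt_const.eventually_lt hτ.continuousAt (by linarith : c - δ < τ y₀)]
      with y hy
    split_ifs with hc
    · exact hAB y hy (by linarith)
    · rfl

variable {δ ε : ℝ} {u v : ℝ × ℝ → ℝ}

section Generic

variable {X : Type*} {h₁ h₂ : ℝ × ℝ → X}

noncomputable def reparamHorizComp (u v : ℝ × ℝ → ℝ) (h₁ h₂ : ℝ × ℝ → X) : ℝ × ℝ × ℝ → X :=
  fun p => horizComp (fun q => h₁ (u (p.1, q.1), q.2)) (fun q => h₂ (v (p.1, q.1), q.2)) p.2

theorem reparamHorizComp_of_le_left (hc₁ : IsCollared ε h₁) (hc₂ : IsCollared ε h₂)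
    (hu : IsCollarReparam δ ε u) (hv : IsCollarReparam δ ε v) (r : ℝ) {s : ℝ} (hs : s ≤ δ)
    (t : ℝ) : reparamHorizComp u v h₁ h₂ (r, s, t) = horizComp h₁ h₂ (0, t) := by
  simp only [reparamHorizComp, horizComp, hc₁.left _ ((hu.mapsCollar r).1 s hs),
    hc₂.left _ ((hv.mapsCollar r).1 s hs)]

theorem reparamHorizComp_of_ge_right (hc₁ : IsCollared ε h₁) (hc₂ : IsCollared ε h₂)
    (hu : IsCollarReparam δ ε u) (hv : IsCollarReparam δ ε v) (r : ℝ) {s : ℝ} (hs : 1 - δ ≤ s)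
    (t : ℝ) : reparamHorizComp u v h₁ h₂ (r, s, t) = horizComp h₁ h₂ (1, t) := by
  simp only [reparamHorizComp, horizComp, hc₁.right _ ((hu.mapsCollar r).2 s hs),
    hc₂.right _ ((hv.mapsCollar r).2 s hs)]

theorem reparamHorizComp_of_le_bottom (hc₁ : IsCollared ε h₁) (hδε : 2 * δ ≤ ε)
    (hε : ε ≤ 1 / 2) (r s : ℝ) {t : ℝ} (ht : t ≤ δ) :
    reparamHorizComp u v h₁ h₂ (r, s, t) = h₁ (0, 0) := by
  simp only [reparamHorizComp, horizComp]
  rw [if_pos (by linarith)]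
  exact hc₁.bottom _ (by linarith) _

theorem reparamHorizComp_of_ge_top (hc₂ : IsCollared ε h₂) (hδε : 2 * δ ≤ ε)
    (hε : ε ≤ 1 / 2) (r s : ℝ) {t : ℝ} (ht : 1 - δ ≤ t) :
    reparamHorizComp u v h₁ h₂ (r, s, t) = h₂ (0, 1) := by
  simp only [reparamHorizComp, horizComp]
  rw [if_neg (by linarith)]
  exact hc₂.top _ (by linarith) _

/- Both halves sit at the common junction point when `t` is within `δ` of `1 / 2`, so near any
point the family coincides with one of two smooth maps through `ℝ × ℝ`. -/
theorem reparamHorizComp_eventuallyEq (hc₁ : IsCollared ε h₁) (hc₂ : IsCollared ε h₂)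
    (hmatch : h₁ (0, 1) = h₂ (0, 0)) (hδ : 0 < δ) (hδε : 2 * δ ≤ ε) (p : ℝ × ℝ × ℝ) :
    reparamHorizComp u v h₁ h₂ =ᶠ[nhds p] h₁ ∘ (fun q => (u (q.1, q.2.1), 2 * q.2.2)) ∨
      reparamHorizComp u v h₁ h₂ =ᶠ[nhds p] h₂ ∘ (fun q => (v (q.1, q.2.1), 2 * q.2.2 - 1)) :=
  eventuallyEq_ite_of_eqOn_window (by fun_prop : Continuous fun q : ℝ × ℝ × ℝ => q.2.2) hδ
    (fun _ hlo hhi => (hc₁.top _ (by linarith) _).trans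
      (hmatch.trans (hc₂.bottom _ (by linarith) _).symm)) p

end Generic

section Smooth

variable {h₁ h₂ : ℝ × ℝ → M}

theorem contMDiff_reparamHorizComp (hs₁ : ContMDiff 𝓘(ℝ, ℝ × ℝ) 𝓘(ℝ, E) (⊤ : ℕ∞) h₁)
    (hs₂ : ContMDiff 𝓘(ℝ, ℝ × ℝ) 𝓘(ℝ, E) (⊤ : ℕ∞) h₂) (hc₁ : IsCollared ε h₁)
    (hc₂ : IsCollared ε h₂) (hmatch : h₁ (0, 1) = h₂ (0, 0)) (hu : ContDiff ℝ (⊤ : ℕ∞) u)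
    (hv : ContDiff ℝ (⊤ : ℕ∞) v) (hδ : 0 < δ) (hδε : 2 * δ ≤ ε) :
    ContMDiff 𝓘(ℝ, ℝ × ℝ × ℝ) 𝓘(ℝ, E) (⊤ : ℕ∞) (reparamHorizComp u v h₁ h₂) := fun p =>
  (reparamHorizComp_eventuallyEq hc₁ hc₂ hmatch hδ hδε p).elim
    (((hs₁.comp (contMDiff_iff_contDiff.mpr (by fun_prop))) p).congr_of_eventuallyEq ·)
    (((hs₂.comp (contMDiff_iff_contDiff.mpr (by fun_prop))) p).congr_of_eventuallyEq ·)

theorem finrank_range_mfderiv_reparamHorizComp_le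
    (hs₁ : MDifferentiable 𝓘(ℝ, ℝ × ℝ) 𝓘(ℝ, E) h₁)
    (hs₂ : MDifferentiable 𝓘(ℝ, ℝ × ℝ) 𝓘(ℝ, E) h₂) (hc₁ : IsCollared ε h₁)
    (hc₂ : IsCollared ε h₂) (hmatch : h₁ (0, 1) = h₂ (0, 0)) (hu : Differentiable ℝ u)
    (hv : Differentiable ℝ v) (hδ : 0 < δ) (hδε : 2 * δ ≤ ε) (p : ℝ × ℝ × ℝ) :
    Module.finrank ℝ (LinearMap.range
      (mfderiv 𝓘(ℝ, ℝ × ℝ × ℝ) 𝓘(ℝ, E) (reparamHorizComp u v h₁ h₂) p).toLinearMap) ≤ 2 := by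
  have hdim : Module.finrank ℝ (ℝ × ℝ) = 2 := by simp
  rcases reparamHorizComp_eventuallyEq hc₁ hc₂ hmatch hδ hδε p with h | h
  · exact hdim ▸ finrank_range_mfderiv_le_of_eventuallyEq_comp (hs₁ _) (by fun_prop) h
  · exact hdim ▸ finrank_range_mfderiv_le_of_eventuallyEq_comp (hs₂ _) (by fun_prop) h

end Smooth

section Homotopy

variable {h₁ h₂ : ℝ × ℝ → M}

theorem isThreePath_reparamHorizComp (hs₁ : ContMDiff 𝓘(ℝ, ℝ × ℝ) 𝓘(ℝ, E) (⊤ : ℕ∞) h₁)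
    (hs₂ : ContMDiff 𝓘(ℝ, ℝ × ℝ) 𝓘(ℝ, E) (⊤ : ℕ∞) h₂) (hc₁ : IsCollared ε h₁)
    (hc₂ : IsCollared ε h₂) (hmatch : h₁ (0, 1) = h₂ (0, 0)) (hu : IsCollarReparam δ ε u)
    (hv : IsCollarReparam δ ε v) (hδ : 0 < δ) (hδε : 2 * δ ≤ ε) (hε : ε ≤ 1 / 2) :
    IsThreePath E (reparamHorizComp u v h₁ h₂) := by
  have hδ1 : 1 - δ ≤ 1 := by linarith
  refine ⟨contMDiff_reparamHorizComp hs₁ hs₂ hc₁ hc₂ hmatch hu.contDiff hv.contDiff hδ hδε,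
    ⟨δ, hδ, fun r s t hr => ?_, fun r s t hr => ?_, fun r s t hs => ?_, fun r s t hs => ?_,
      fun r s t ht => ?_, fun r s t ht => ?_⟩, fun r s r' s' => ?_, fun r s r' s' => ?_⟩
  · simp only [reparamHorizComp, hu.eq_zero r hr, hv.eq_zero r hr]
  · simp only [reparamHorizComp, hu.eq_one r hr, hv.eq_one r hr]
  · rw [reparamHorizComp_of_le_left hc₁ hc₂ hu hv r hs,
      reparamHorizComp_of_le_left hc₁ hc₂ hu hv r hδ.le]
  · rw [reparamHorizComp_of_ge_right hc₁ hc₂ hu hv r hs,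
      reparamHorizComp_of_ge_right hc₁ hc₂ hu hv r hδ1]
  · rw [reparamHorizComp_of_le_bottom hc₁ hδε hε r s ht,
      reparamHorizComp_of_le_bottom hc₁ hδε hε r s hδ.le]
  · rw [reparamHorizComp_of_ge_top hc₂ hδε hε r s ht,
      reparamHorizComp_of_ge_top hc₂ hδε hε r s hδ1]
  · rw [reparamHorizComp_of_le_bottom hc₁ hδε hε r s hδ.le,
      reparamHorizComp_of_le_bottom hc₁ hδε hε r' s' hδ.le]
  · rw [reparamHorizComp_of_ge_top hc₂ hδε hε r s hδ1,
      reparamHorizComp_of_ge_top hc₂ hδε hε r' s' hδ1]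

theorem isRank2Homotopy_reparamHorizComp (hs₁ : ContMDiff 𝓘(ℝ, ℝ × ℝ) 𝓘(ℝ, E) (⊤ : ℕ∞) h₁)
    (hs₂ : ContMDiff 𝓘(ℝ, ℝ × ℝ) 𝓘(ℝ, E) (⊤ : ℕ∞) h₂) (hc₁ : IsCollared ε h₁)
    (hc₂ : IsCollared ε h₂) (hmatch : h₁ (0, 1) = h₂ (0, 0)) (hu : IsCollarReparam δ ε u)
    (hv : IsCollarReparam δ ε v) (hδ : 0 < δ) (hδε : 2 * δ ≤ ε) (hε : ε ≤ 1 / 2) :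
    IsRank2Homotopy E (reparamHorizComp u v h₁ h₂) := by
  have hα := isThreePath_reparamHorizComp hs₁ hs₂ hc₁ hc₂ hmatch hu hv hδ hδε hε
  have hδ1 : 1 - δ ≤ 1 := by linarith
  have slice_zero : (fun p : ℝ × ℝ => reparamHorizComp u v h₁ h₂ (p.1, 0, p.2)) =
      fun p => reparamHorizComp u v h₁ h₂ (0, 0, p.2) := funext fun p => by
    rw [reparamHorizComp_of_le_left hc₁ hc₂ hu hv p.1 hδ.le,
      reparamHorizComp_of_le_left hc₁ hc₂ hu hv 0 hδ.le]
  have slice_one : (fun p : ℝ × ℝ => reparamHorizComp u v h₁ h₂ (p.1, 1, p.2)) =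
      fun p => reparamHorizComp u v h₁ h₂ (0, 1, p.2) := funext fun p => by
    rw [reparamHorizComp_of_ge_right hc₁ hc₂ hu hv p.1 hδ1,
      reparamHorizComp_of_ge_right hc₁ hc₂ hu hv 0 hδ1]
  refine ⟨hα, finrank_range_mfderiv_reparamHorizComp_le (hs₁.mdifferentiable (by simp))
    (hs₂.mdifferentiable (by simp)) hc₁ hc₂ hmatch (hu.contDiff.differentiable (by simp))
    (hv.contDiff.differentiable (by simp)) hδ hδε, ?_, ?_⟩
  · rw [slice_zero]
    exact (hα.isOnePath_slice 0 0).isRank1Homotopy_snd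
  · rw [slice_one]
    exact (hα.isOnePath_slice 0 1).isRank1Homotopy_snd

theorem rank2Homotopic_horizComp_reparam (hs₁ : ContMDiff 𝓘(ℝ, ℝ × ℝ) 𝓘(ℝ, E) (⊤ : ℕ∞) h₁)
    (hs₂ : ContMDiff 𝓘(ℝ, ℝ × ℝ) 𝓘(ℝ, E) (⊤ : ℕ∞) h₂) (hc₁ : IsCollared ε h₁)
    (hc₂ : IsCollared ε h₂) (hmatch : h₁ (0, 1) = h₂ (0, 0)) {f g : ℝ → ℝ}
    (hf : ContDiff ℝ (⊤ : ℕ∞) f) (hg : ContDiff ℝ (⊤ : ℕ∞) g) (hfc : MapsCollar δ ε f)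
    (hgc : MapsCollar δ ε g) (hδ : 0 < δ) (hδε : 2 * δ ≤ ε) (hε : ε ≤ 1 / 2) :
    Rank2Homotopic E (horizComp h₁ h₂)
      (horizComp (fun q => h₁ (f q.1, q.2)) (fun q => h₂ (g q.1, q.2))) := by
  have hδ3 : δ ≤ 1 / 3 := by linarith
  have hδε' : δ ≤ ε := by linarith
  refine ⟨reparamHorizComp (homotopyReparam f) (homotopyReparam g) h₁ h₂,
    isRank2Homotopy_reparamHorizComp hs₁ hs₂ hc₁ hc₂ hmatch
      (isCollarReparam_homotopyReparam hf hfc hδ3 hδε')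
      (isCollarReparam_homotopyReparam hg hgc hδ3 hδε') hδ hδε hε,
    fun s t => ?_, fun s t => ?_⟩
  · simp only [reparamHorizComp, homotopyReparam_of_le _ (r := 0) (by norm_num)]
  · simp only [reparamHorizComp, homotopyReparam_of_ge _ (r := 1) (by norm_num)]

end Homotopy

variable (E)

/-- A horizontal composition of 2-paths is rank-2 homotopic to its two whiskered vertical
decompositions. -/
theorem horizComp_whisker_decomposition (h₁ h₂ : ℝ × ℝ → M)
    (hh₁ : IsTwoPath E h₁) (hh₂ : IsTwoPath E h₂)
    (hmatch : h₁ (0, 1) = h₂ (0, 0)) :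
    Rank2Homotopic E (horizComp h₁ h₂)
      (vertComp (rightWhisker h₁ (fun t => h₂ (0, t)))
        (leftWhisker (fun t => h₁ (1, t)) h₂)) ∧
    Rank2Homotopic E (horizComp h₁ h₂)
      (vertComp (leftWhisker (fun t => h₁ (0, t)) h₂)
        (rightWhisker h₁ (fun t => h₂ (1, t)))) := by
  obtain ⟨ε₁, hε₁, hc₁⟩ := hh₁.exists_isCollared
  obtain ⟨ε₂, hε₂, hc₂⟩ := hh₂.exists_isCollared
  obtain ⟨ε, hε, hε2, hc₁, hc₂⟩ : ∃ ε > 0, ε ≤ 1 / 2 ∧ IsCollared ε h₁ ∧ IsCollared ε h₂ :=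
    ⟨min (min ε₁ ε₂) (1 / 2), lt_min (lt_min hε₁ hε₂) one_half_pos, min_le_right _ _,
      hc₁.mono ((min_le_left _ _).trans (min_le_left _ _)),
      hc₂.mono ((min_le_left _ _).trans (min_le_right _ _))⟩
  have hδε : 2 * (ε / 2) ≤ ε := by linarith
  have hfirst := mapsCollar_firstHalfReparam hε hε2 hδε
  have hsecond := mapsCollar_secondHalfReparam hε hε2 hδε
  constructor
  · rw [vertComp_rightWhisker_leftWhisker_eq hc₁ hc₂ hε]
    exact rank2Homotopic_horizComp_reparam hh₁.1 hh₂.1 hc₁ hc₂ hmatch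
      (contDiff_firstHalfReparam ε) (contDiff_secondHalfReparam ε) hfirst hsecond
      (half_pos hε) hδε hε2
  · rw [vertComp_leftWhisker_rightWhisker_eq hc₁ hc₂ hε]
    exact rank2Homotopic_horizComp_reparam hh₁.1 hh₂.1 hc₁ hc₂ hmatch
      (contDiff_secondHalfReparam ε) (contDiff_firstHalfReparam ε) hsecond hfirst
      (half_pos hε) hδε hε2
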